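/- arXiv:0811.2649 — 3 statements merged into one kernel-verified Lean document; each statement's English description precedes it below -/
import Mathlib

section
/- Let \sigma_\mu(y) = \|K_\mu(\cdot,y)\|_{L^2} and define \tilde{\sigma}_\mu(x) = max( sup_{\nu \in \Theta} \int |K_\nu(y,x)| \sigma_\mu(y) dy , \sigma_\mu(x) ). Then for the composed kernel K_{\mu,\nu}(t,x) = \int K_\mu(t,y)K_\nu(y,x)dy, one has the variance bound \sigma_{\mu,\nu}(x) := \|K_{\mu,\nu}(\cdot,x) - K_\nu(\cdot,x)\|_{L^2} \leq \tilde{\sigma}_\mu(x) + \tilde{\sigma}_\nu(x), where the key step is the Minkowski integral inequality \|K_{\mu,\nu}(\cdot,x)\|_{L^2} \leq \int |K_\nu(y,x)| \, \|K_\mu(\cdot,y)\|_{L^2} dy \leq \tilde{\sigma}_\mu(x). -/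
/-!
At `x`, the composed kernel `t ↦ ∫ K_μ(t,y) K_ν(y,x) dy` is a superposition of the columns
`K_μ(·,y)` with weights `K_ν(y,x)`, so Minkowski's integral inequality bounds its `L²` norm by
`∫ |K_ν(y,x)| σ_μ(y) dy ≤ σ̃_μ(x)`. The triangle inequality in `L²` and `σ_ν ≤ σ̃_ν` then give the
variance bound. Minkowski's inequality for the exponent `2` follows by writing `(∫ F(t,y) dy)²` as
`∫∫ F(t,y) F(t,z) dy dz`, integrating in `t` first and applying Cauchy–Schwarz in `t`.
-/

open MeasureTheory ENNReal

namespace MeasureTheory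

variable {α β : Type*} [MeasurableSpace α] [MeasurableSpace β] {μ : Measure α} {ν : Measure β}

lemma sqrt_integral_sq_eq_lpNorm {f : α → ℝ} (hf : AEStronglyMeasurable f μ) :
    √(∫ t, f t ^ 2 ∂μ) = lpNorm f 2 μ := by
  have := lpNorm_nnreal_eq_integral_norm_rpow (p := 2) two_ne_zero hf
  simp only [ENNReal.coe_ofNat, NNReal.coe_ofNat, Real.norm_eq_abs, Real.rpow_two, sq_abs] at this
  rw [this, Real.sqrt_eq_rpow, one_div]

lemma eLpNorm_two_sq {ε : Type*} [ENorm ε] (f : α → ε) :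
    eLpNorm f 2 μ ^ 2 = ∫⁻ t, ‖f t‖ₑ ^ 2 ∂μ := by
  simpa using eLpNorm_nnreal_pow_eq_lintegral (f := f) (μ := μ) (p := 2) two_ne_zero

lemma lintegral_mul_le_eLpNorm_two_mul {f g : α → ℝ≥0∞} (hf : AEMeasurable f μ)
    (hg : AEMeasurable g μ) : ∫⁻ t, f t * g t ∂μ ≤ eLpNorm f 2 μ * eLpNorm g 2 μ := by
  simpa [eLpNorm_eq_lintegral_rpow_enorm_toReal] using
    ENNReal.lintegral_mul_le_Lp_mul_Lq μ Real.HolderConjugate.two_two hf hg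

lemma measurable_eLpNorm_apply [SFinite μ] {F : α → β → ℝ≥0∞} {p : ℝ≥0∞} (hp₀ : p ≠ 0)
    (hp : p ≠ ∞) (hF : Measurable (Function.uncurry F)) :
    Measurable fun y ↦ eLpNorm (F · y) p μ := by
  simp_rw [eLpNorm_eq_lintegral_rpow_enorm_toReal hp₀ hp, enorm_eq_self]
  exact (Measurable.lintegral_prod_left (hF.pow_const _)).pow_const _

lemma measurable_lpNorm_apply [SFinite μ] {k : α → β → ℝ} {p : ℝ≥0∞} (hp₀ : p ≠ 0)
    (hp : p ≠ ∞) (hk : Measurable (Function.uncurry k)) :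
    Measurable fun y ↦ lpNorm (k · y) p μ := by
  simp_rw [← toReal_eLpNorm hk.of_uncurry_right.aestronglyMeasurable, ← eLpNorm_enorm (k · _)]
  exact (measurable_eLpNorm_apply (F := fun t y ↦ ‖k t y‖ₑ) hp₀ hp hk.enorm).ennreal_toReal

theorem eLpNorm_two_lintegral_le [SFinite μ] [SFinite ν] {F : α → β → ℝ≥0∞}
    (hF : Measurable (Function.uncurry F)) :
    eLpNorm (fun t ↦ ∫⁻ y, F t y ∂ν) 2 μ ≤ ∫⁻ y, eLpNorm (F · y) 2 μ ∂ν := by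
  have hnorm : AEMeasurable (fun y ↦ eLpNorm (F · y) 2 μ) ν :=
    (measurable_eLpNorm_apply two_ne_zero ofNat_ne_top hF).aemeasurable
  rw [← ENNReal.pow_le_pow_left_iff two_ne_zero, eLpNorm_two_sq]
  calc ∫⁻ t, ‖∫⁻ y, F t y ∂ν‖ₑ ^ 2 ∂μ
      = ∫⁻ t, ∫⁻ p, F t p.1 * F t p.2 ∂ν.prod ν ∂μ := by
        refine lintegral_congr fun t ↦ ?_
        rw [enorm_eq_self, sq, lintegral_prod_mul hF.of_uncurry_left.aemeasurable
          hF.of_uncurry_left.aemeasurable]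
    _ = ∫⁻ p, ∫⁻ t, F t p.1 * F t p.2 ∂μ ∂ν.prod ν := by
        refine lintegral_lintegral_swap (Measurable.aemeasurable ?_)
        exact (hF.comp (measurable_fst.prodMk (measurable_fst.comp measurable_snd))).mul
          (hF.comp (measurable_fst.prodMk (measurable_snd.comp measurable_snd)))
    _ ≤ ∫⁻ p, eLpNorm (F · p.1) 2 μ * eLpNorm (F · p.2) 2 μ ∂ν.prod ν :=
        lintegral_mono fun p ↦ lintegral_mul_le_eLpNorm_two_mul
          hF.of_uncurry_right.aemeasurable hF.of_uncurry_right.aemeasurable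
    _ = (∫⁻ y, eLpNorm (F · y) 2 μ ∂ν) ^ 2 := by
        rw [sq, lintegral_prod_mul hnorm hnorm]

theorem eLpNorm_two_integral_le [SFinite μ] [SFinite ν] {k : α → β → ℝ}
    (hk : Measurable (Function.uncurry k)) :
    eLpNorm (fun t ↦ ∫ y, k t y ∂ν) 2 μ ≤ ∫⁻ y, eLpNorm (k · y) 2 μ ∂ν :=
  calc eLpNorm (fun t ↦ ∫ y, k t y ∂ν) 2 μ
      ≤ eLpNorm (fun t ↦ ∫⁻ y, ‖k t y‖ₑ ∂ν) 2 μ :=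
        eLpNorm_mono_enorm fun t ↦ by
          simpa only [enorm_eq_self] using enorm_integral_le_lintegral_enorm _
    _ ≤ ∫⁻ y, eLpNorm (fun t ↦ ‖k t y‖ₑ) 2 μ ∂ν := eLpNorm_two_lintegral_le hk.enorm
    _ = ∫⁻ y, eLpNorm (k · y) 2 μ ∂ν := by simp only [eLpNorm_enorm]

theorem lpNorm_two_integral_mul_le [SFinite μ] [SFinite ν] {k : α → β → ℝ} {g : β → ℝ}
    (hk : Measurable (Function.uncurry k)) (hg : Measurable g)
    (hk₂ : ∀ᵐ y ∂ν, MemLp (k · y) 2 μ)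
    (hweight : Integrable (fun y ↦ |g y| * lpNorm (k · y) 2 μ) ν) :
    MemLp (fun t ↦ ∫ y, k t y * g y ∂ν) 2 μ ∧
      lpNorm (fun t ↦ ∫ y, k t y * g y ∂ν) 2 μ ≤ ∫ y, |g y| * lpNorm (k · y) 2 μ ∂ν := by
  have hkg : Measurable (Function.uncurry fun t y ↦ k t y * g y) :=
    hk.mul (hg.comp measurable_snd)
  have hweight_nonneg (y : β) : 0 ≤ |g y| * lpNorm (k · y) 2 μ :=
    mul_nonneg (abs_nonneg _) lpNorm_nonneg
  have hle : eLpNorm (fun t ↦ ∫ y, k t y * g y ∂ν) 2 μ ≤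
      .ofReal (∫ y, |g y| * lpNorm (k · y) 2 μ ∂ν) :=
    calc eLpNorm (fun t ↦ ∫ y, k t y * g y ∂ν) 2 μ
        ≤ ∫⁻ y, eLpNorm (fun t ↦ g y • k t y) 2 μ ∂ν := by
          simpa only [smul_eq_mul, mul_comm] using eLpNorm_two_integral_le hkg
      _ = ∫⁻ y, .ofReal (|g y| * lpNorm (k · y) 2 μ) ∂ν := by
          refine lintegral_congr_ae (hk₂.mono fun y hy ↦ ?_)
          dsimp only
          rw [ENNReal.ofReal_mul (abs_nonneg _), ← Real.enorm_eq_ofReal_abs, ofReal_lpNorm hy]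
          exact eLpNorm_const_smul (g y) (k · y) 2 μ
      _ = .ofReal (∫ y, |g y| * lpNorm (k · y) 2 μ ∂ν) :=
          (ofReal_integral_eq_lintegral_ofReal hweight (.of_forall hweight_nonneg)).symm
  have hmeas : AEStronglyMeasurable (fun t ↦ ∫ y, k t y * g y ∂ν) μ :=
    hkg.stronglyMeasurable.integral_prod_right.aestronglyMeasurable
  refine ⟨⟨hmeas, hle.trans_lt ofReal_lt_top⟩, ?_⟩
  rw [← toReal_eLpNorm hmeas]
  exact toReal_le_of_le_ofReal (integral_nonneg hweight_nonneg) hle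

end MeasureTheory

theorem composed_kernel_variance_bound_general {d : ℕ} {Θ : Type*}
    (K : Θ → (Fin d → ℝ) → (Fin d → ℝ) → ℝ)
    (hmeas : ∀ θ, Measurable (Function.uncurry (K θ)))
    (hL2 : ∀ θ x, Integrable (fun t => (K θ t x) ^ 2))
    (hL2' : ∀ θ, ∃ C, ∀ x, (∫ t, (K θ t x) ^ 2) ≤ C)
    (hL1 : ∀ θ x, Integrable (fun t => K θ t x))
    (σ : Θ → (Fin d → ℝ) → ℝ)
    (hσ : ∀ θ y, σ θ y = Real.sqrt (∫ t, (K θ t y) ^ 2))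
    (tσ : Θ → (Fin d → ℝ) → ℝ)
    (htσ1 : ∀ θ x θ', (∫ y, |K θ' y x| * σ θ y) ≤ tσ θ x)
    (htσ2 : ∀ θ x, σ θ x ≤ tσ θ x)
    (μ ν : Θ) (x : Fin d → ℝ) :
    Real.sqrt (∫ t, (∫ y, K μ t y * K ν y x) ^ 2) ≤ tσ μ x ∧
    Real.sqrt (∫ t, ((∫ y, K μ t y * K ν y x) - K ν t x) ^ 2) ≤ tσ μ x + tσ ν x := by
  have hK (θ y) : AEStronglyMeasurable (K θ · y) := (hmeas θ).of_uncurry_right.aestronglyMeasurable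
  have hσ_eq (θ y) : σ θ y = lpNorm (K θ · y) 2 volume := by
    rw [hσ, sqrt_integral_sq_eq_lpNorm (hK θ y)]
  simp only [hσ_eq] at htσ1 htσ2
  have hweight : Integrable fun y ↦ |K ν y x| * lpNorm (K μ · y) 2 volume := by
    obtain ⟨C, hC⟩ := hL2' μ
    refine (hL1 ν x).abs.mul_bdd (measurable_lpNorm_apply two_ne_zero ofNat_ne_top
      (hmeas μ)).aestronglyMeasurable (c := √C) (.of_forall fun y ↦ ?_)
    rw [Real.norm_of_nonneg lpNorm_nonneg, ← hσ_eq, hσ]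
    exact Real.sqrt_le_sqrt (hC y)
  obtain ⟨hH_mem, hH_le⟩ := lpNorm_two_integral_mul_le (hmeas μ) (hmeas ν).of_uncurry_right
    (.of_forall fun y ↦ (memLp_two_iff_integrable_sq (hK μ y)).2 (hL2 μ y)) hweight
  set H := fun t ↦ ∫ y, K μ t y * K ν y x
  have hH : lpNorm H 2 volume ≤ tσ μ x := hH_le.trans (htσ1 μ x ν)
  show √(∫ t, H t ^ 2) ≤ _ ∧ √(∫ t, (H t - K ν t x) ^ 2) ≤ _
  rw [sqrt_integral_sq_eq_lpNorm hH_mem.1,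
    sqrt_integral_sq_eq_lpNorm (f := fun t ↦ H t - K ν t x) (hH_mem.1.sub (hK ν x))]
  exact ⟨hH, (lpNorm_sub_le hH_mem one_le_two).trans (add_le_add hH (htσ2 ν x))⟩

/-- Variance bound (18): with `σ_μ(y) = ‖K_μ(·,y)‖₂` and
`σ̃_μ(x) = max(sup_{ν∈Θ} ∫ |K_ν(y,x)| σ_μ(y) dy, σ_μ(x))`, the composed kernel
`K_{μ,ν}(t,x) = ∫ K_μ(t,y)K_ν(y,x)dy` satisfies
`‖K_{μ,ν}(·,x)‖₂ ≤ σ̃_μ(x)` (Minkowski integral inequality) and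
`σ_{μ,ν}(x) = ‖K_{μ,ν}(·,x) - K_ν(·,x)‖₂ ≤ σ̃_μ(x) + σ̃_ν(x)`. -/
theorem composed_kernel_variance_bound {d : ℕ} {Θ : Type*}
    (K : Θ → (Fin d → ℝ) → (Fin d → ℝ) → ℝ)
    (hmeas : ∀ θ, Measurable (Function.uncurry (K θ)))
    (hL2 : ∀ θ x, Integrable (fun t => (K θ t x) ^ 2))
    (hL2' : ∀ θ, ∃ C, ∀ x, (∫ t, (K θ t x) ^ 2) ≤ C)
    (hL1 : ∀ θ x, Integrable (fun t => K θ t x))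
    (hL1' : ∀ θ, ∃ C, ∀ x, (∫ t, |K θ t x|) ≤ C)
    (σ : Θ → (Fin d → ℝ) → ℝ)
    (hσ : ∀ θ y, σ θ y = Real.sqrt (∫ t, (K θ t y) ^ 2))
    (tσ : Θ → (Fin d → ℝ) → ℝ)
    (htσ1 : ∀ θ x θ', (∫ y, |K θ' y x| * σ θ y) ≤ tσ θ x)
    (htσ2 : ∀ θ x, σ θ x ≤ tσ θ x)
    (μ ν : Θ) (x : Fin d → ℝ) :
    Real.sqrt (∫ t, (∫ y, K μ t y * K ν y x) ^ 2) ≤ tσ μ x ∧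
    Real.sqrt (∫ t, ((∫ y, K μ t y * K ν y x) - K ν t x) ^ 2) ≤ tσ μ x + tσ ν x :=
  composed_kernel_variance_bound_general K hmeas hL2 hL2' hL1 σ hσ tσ htσ1 htσ2 μ ν x
end

section
/- Let Y be a nonnegative random variable, e \geq 0, \sigma > 0, and suppose P(Y > e + u) \leq 2 exp(-u^2/(2\sigma^2)) for all u > 0. Then for r > 1, E[Y^r] \leq e^r + 2r \int_0^\infty (t + e)^{r-1} exp(-t^2/(2\sigma^2)) dt \leq 8r (e + \sigma)^r \int_0^\infty (t \vee 1)^{r-1} exp(-t^2/2) dt. -/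
/-!
By the layer-cake formula `E[Y^r] = ∫₀^∞ r s^(r-1) P(Y > s) ds`. Bounding `P(Y > s)` by `1` for
`s ≤ e` and by the Gaussian tail for `s = e + u > e` gives the first inequality. For the second,
substitute `t = σ s` and use `σ s + e ≤ (e + σ) (s ∨ 1)`; the term `e^r` is absorbed because
`∫₀^∞ (t ∨ 1)^(r-1) exp(-t²/2) dt ≥ ∫₀^∞ exp(-t²/2) dt = √(2π)/2 ≥ 1`.
-/

open MeasureTheory Set Real

theorem setIntegral_Ioi_zero_comp_add_right {E : Type*} [NormedAddCommGroup E]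
    [NormedSpace ℝ E] (f : ℝ → E) (e : ℝ) :
    ∫ u in Ioi 0, f (u + e) = ∫ t in Ioi e, f t := by
  simpa using ((measurePreserving_add_right volume e).setIntegral_image_emb
    (MeasurableEquiv.addRight e).measurableEmbedding f (Ioi 0)).symm

theorem integrableOn_Ioi_zero_comp_add_right_iff {E : Type*} [NormedAddCommGroup E]
    {f : ℝ → E} {e : ℝ} :
    IntegrableOn (fun u => f (u + e)) (Ioi 0) ↔ IntegrableOn f (Ioi e) := by
  simpa [Function.comp_def] using ((measurePreserving_add_right volume e).integrableOn_image
    (MeasurableEquiv.addRight e).measurableEmbedding (f := f) (s := Ioi 0)).symm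

theorem integral_Ioc_mul_rpow_sub_one {r e : ℝ} (hr : 0 < r) (he : 0 ≤ e) :
    ∫ s in Ioc 0 e, r * s ^ (r - 1) = e ^ r := by
  rw [← intervalIntegral.integral_of_le he, intervalIntegral.integral_const_mul,
    integral_rpow (Or.inl (by linarith)), sub_add_cancel, zero_rpow hr.ne']
  field_simp
  ring

theorem integral_rpow_eq_integral_mul_meas_lt {Ω : Type*} [MeasurableSpace Ω] {μ : Measure Ω}
    {Y : Ω → ℝ} (hY : ∀ ω, 0 ≤ Y ω) {r : ℝ} (hr : 0 < r)
    (hint : Integrable (fun ω => Y ω ^ r) μ) :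
    ∫ ω, Y ω ^ r ∂μ = ∫ s in Ioi 0, r * s ^ (r - 1) * μ.real {ω | s < Y ω} := by
  rw [hint.integral_eq_integral_meas_lt (ae_of_all _ fun ω => rpow_nonneg (hY ω) r),
    ← integral_comp_rpow_Ioi_of_pos hr]
  refine setIntegral_congr_fun measurableSet_Ioi fun s (hs : 0 < s) => ?_
  simp_rw [smul_eq_mul, rpow_lt_rpow_iff hs.le (hY _) hr]

theorem integral_rpow_le_of_meas_lt_add_le {Ω : Type*} [MeasurableSpace Ω] {P : Measure Ω}
    [IsZeroOrProbabilityMeasure P] {Y : Ω → ℝ} (hY : ∀ ω, 0 ≤ Y ω) {r e : ℝ} (hr : 0 < r)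
    (he : 0 ≤ e) {ψ : ℝ → ℝ} (hψ : ∀ u, 0 < u → P.real {ω | e + u < Y ω} ≤ ψ u)
    (hψint : IntegrableOn (fun u => (u + e) ^ (r - 1) * ψ u) (Ioi 0)) :
    ∫ ω, Y ω ^ r ∂P ≤ e ^ r + r * ∫ u in Ioi 0, (u + e) ^ (r - 1) * ψ u := by
  by_cases hint : Integrable (fun ω => Y ω ^ r) P
  swap
  -- the Bochner integral of a non-integrable function is `0`
  · have : 0 ≤ ∫ u in Ioi 0, (u + e) ^ (r - 1) * ψ u :=
      setIntegral_nonneg measurableSet_Ioi fun u (hu : 0 < u) =>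
        mul_nonneg (rpow_nonneg (by linarith) _) (measureReal_nonneg.trans (hψ u hu))
    rw [integral_undef hint]
    positivity
  set F : ℝ → ℝ := fun s => r * s ^ (r - 1) * P.real {ω | s < Y ω}
  have hF_meas : AEStronglyMeasurable F volume := by
    have : Antitone fun s => P.real {ω | s < Y ω} := fun s t hst =>
      measureReal_mono fun ω (h : t < Y ω) => hst.trans_lt h
    exact (((measurable_const.mul (measurable_id.pow_const _)).mul
      this.measurable)).aestronglyMeasurable
  have hF_nonneg : ∀ s ∈ Ioi (0 : ℝ), 0 ≤ F s := fun s (hs : 0 < s) =>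
    mul_nonneg (by positivity) measureReal_nonneg
  have hψ' : ∀ s ∈ Ioi e, P.real {ω | s < Y ω} ≤ ψ (s - e) := fun s (hs : e < s) => by
    simpa using hψ (s - e) (sub_pos.2 hs)
  have hF_le_Ioc : ∀ s ∈ Ioc 0 e, F s ≤ r * s ^ (r - 1) := fun s hs =>
    mul_le_of_le_one_right (by have := hs.1; positivity) measureReal_le_one
  have hF_le_Ioi : ∀ s ∈ Ioi e, F s ≤ r * (s ^ (r - 1) * ψ (s - e)) := fun s hs => by
    have : 0 < s := he.trans_lt hs
    exact (mul_le_mul_of_nonneg_left (hψ' s hs) (by positivity)).trans_eq (mul_assoc _ _ _)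
  have hint_Ioc : IntegrableOn (fun s => r * s ^ (r - 1)) (Ioc 0 e) :=
    ((intervalIntegral.intervalIntegrable_rpow' (by linarith)).1).const_mul r
  have hint_Ioi : IntegrableOn (fun s => r * (s ^ (r - 1) * ψ (s - e))) (Ioi e) := by
    rw [← integrableOn_Ioi_zero_comp_add_right_iff]
    simp only [add_sub_cancel_right]
    exact hψint.const_mul r
  have hF_Ioc : IntegrableOn F (Ioc 0 e) :=
    hint_Ioc.mono' hF_meas.restrict <| (ae_restrict_iff' measurableSet_Ioc).2 <| ae_of_all _
      fun s hs => (norm_of_nonneg (hF_nonneg s hs.1)).trans_le (hF_le_Ioc s hs)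
  have hF_Ioi : IntegrableOn F (Ioi e) :=
    hint_Ioi.mono' hF_meas.restrict <| (ae_restrict_iff' measurableSet_Ioi).2 <| ae_of_all _
      fun s hs => (norm_of_nonneg (hF_nonneg s (he.trans_lt hs))).trans_le (hF_le_Ioi s hs)
  calc ∫ ω, Y ω ^ r ∂P = ∫ s in Ioi 0, F s := integral_rpow_eq_integral_mul_meas_lt hY hr hint
    _ = (∫ s in Ioc 0 e, F s) + ∫ s in Ioi e, F s := by
      rw [← Ioc_union_Ioi_eq_Ioi he,
        setIntegral_union (Ioc_disjoint_Ioi le_rfl) measurableSet_Ioi hF_Ioc hF_Ioi]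
    _ ≤ (∫ s in Ioc 0 e, r * s ^ (r - 1)) + ∫ s in Ioi e, r * (s ^ (r - 1) * ψ (s - e)) :=
      add_le_add (setIntegral_mono_on hF_Ioc hint_Ioc measurableSet_Ioc hF_le_Ioc)
        (setIntegral_mono_on hF_Ioi hint_Ioi measurableSet_Ioi hF_le_Ioi)
    _ = e ^ r + r * ∫ u in Ioi 0, (u + e) ^ (r - 1) * ψ u := by
      rw [integral_Ioc_mul_rpow_sub_one hr he, integral_const_mul,
        ← setIntegral_Ioi_zero_comp_add_right]
      simp only [add_sub_cancel_right]

theorem max_one_rpow_le_rpow_add_one {t : ℝ} (ht : 0 ≤ t) (p : ℝ) :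
    max t 1 ^ p ≤ t ^ p + 1 := by
  rcases le_total t 1 with h | h
  · rw [max_eq_right h, one_rpow]
    linarith [rpow_nonneg ht p]
  · rw [max_eq_left h]
    linarith

theorem mul_add_rpow_le_add_rpow_mul_max_one_rpow {a b t p : ℝ} (ha : 0 ≤ a) (hb : 0 ≤ b)
    (ht : 0 ≤ t) (hp : 0 ≤ p) : (a * t + b) ^ p ≤ (a + b) ^ p * max t 1 ^ p := by
  have hle : a * t + b ≤ (a + b) * max t 1 := by
    nlinarith [le_max_left t 1, le_max_right t 1]
  rw [← mul_rpow (by positivity) (by positivity)]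
  exact rpow_le_rpow (by positivity) hle hp

theorem integrableOn_max_one_rpow_mul_exp_neg_sq_div {c p : ℝ} (hc : 0 < c) (hp : 0 ≤ p) :
    IntegrableOn (fun t => max t 1 ^ p * exp (-t ^ 2 / c)) (Ioi 0) := by
  have hb : 0 < c⁻¹ := inv_pos.2 hc
  have hdom : Integrable fun t : ℝ => t ^ p * exp (-c⁻¹ * t ^ 2) + exp (-c⁻¹ * t ^ 2) :=
    (integrable_rpow_mul_exp_neg_mul_sq hb (by linarith)).add (integrable_exp_neg_mul_sq hb)
  refine hdom.integrableOn.mono' (by fun_prop) <| (ae_restrict_iff' measurableSet_Ioi).2 <|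
    ae_of_all _ fun t (ht : 0 < t) => ?_
  rw [norm_of_nonneg (by positivity), neg_div, div_eq_inv_mul, ← neg_mul, ← add_one_mul]
  exact mul_le_mul_of_nonneg_right (max_one_rpow_le_rpow_add_one ht.le p) (exp_pos _).le

theorem integrableOn_add_rpow_mul_exp_neg_sq_div {c e p : ℝ} (hc : 0 < c) (he : 0 ≤ e)
    (hp : 0 ≤ p) : IntegrableOn (fun t => (t + e) ^ p * exp (-t ^ 2 / c)) (Ioi 0) := by
  refine ((integrableOn_max_one_rpow_mul_exp_neg_sq_div hc hp).const_mul ((1 + e) ^ p)).mono'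
    (by fun_prop) <| (ae_restrict_iff' measurableSet_Ioi).2 <|
      ae_of_all _ fun t (ht : 0 < t) => ?_
  have hbase := mul_add_rpow_le_add_rpow_mul_max_one_rpow zero_le_one he ht.le hp
  rw [one_mul] at hbase
  rw [norm_of_nonneg (by positivity), ← mul_assoc]
  exact mul_le_mul_of_nonneg_right hbase (exp_pos _).le

theorem integral_add_rpow_mul_exp_neg_sq_div_le {e σ p : ℝ} (he : 0 ≤ e) (hσ : 0 < σ) (hp : 0 ≤ p) :
    ∫ t in Ioi 0, (t + e) ^ p * exp (-t ^ 2 / (2 * σ ^ 2)) ≤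
      (e + σ) ^ (p + 1) * ∫ t in Ioi 0, max t 1 ^ p * exp (-t ^ 2 / 2) := by
  have hsubst : ∫ t in Ioi 0, (t + e) ^ p * exp (-t ^ 2 / (2 * σ ^ 2)) =
      ∫ s in Ioi 0, σ * ((σ * s + e) ^ p * exp (-s ^ 2 / 2)) := by
    have h := integral_comp_mul_left_Ioi' (fun t => (t + e) ^ p * exp (-t ^ 2 / (2 * σ ^ 2))) 0 hσ
    rw [mul_zero] at h
    rw [← h, smul_eq_mul, ← integral_const_mul]
    congr 1 with s
    field_simp
  rw [hsubst, ← integral_const_mul]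
  refine integral_mono_of_nonneg ?_
    ((integrableOn_max_one_rpow_mul_exp_neg_sq_div two_pos hp).const_mul _) ?_
  · filter_upwards [ae_restrict_mem measurableSet_Ioi] with s (hs : 0 < s)
    positivity
  · filter_upwards [ae_restrict_mem measurableSet_Ioi] with s (hs : 0 < s)
    have hbase := mul_add_rpow_le_add_rpow_mul_max_one_rpow hσ.le he hs.le hp
    calc σ * ((σ * s + e) ^ p * exp (-s ^ 2 / 2))
        ≤ (e + σ) * ((σ + e) ^ p * max s 1 ^ p * exp (-s ^ 2 / 2)) :=
          mul_le_mul (by linarith) (mul_le_mul_of_nonneg_right hbase (exp_pos _).le)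
            (by positivity) (by positivity)
      _ = (e + σ) ^ (p + 1) * (max s 1 ^ p * exp (-s ^ 2 / 2)) := by
          rw [rpow_add_one (by positivity), add_comm σ e]
          ring

theorem one_le_integral_max_one_rpow_mul_exp_neg_sq_div {p : ℝ} (hp : 0 ≤ p) :
    1 ≤ ∫ t in Ioi 0, max t 1 ^ p * exp (-t ^ 2 / 2) := by
  have hgauss : ∫ t in Ioi 0, exp (-t ^ 2 / 2) = √(2 * π) / 2 := by
    simpa [neg_div, div_eq_inv_mul] using integral_gaussian_Ioi (1 / 2)
  have hgauss_ge : 1 ≤ √(2 * π) / 2 := by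
    rw [le_div_iff₀ two_pos, one_mul, le_sqrt zero_le_two (by positivity)]
    nlinarith [pi_gt_three]
  calc 1 ≤ √(2 * π) / 2 := hgauss_ge
    _ = ∫ t in Ioi 0, exp (-t ^ 2 / 2) := hgauss.symm
    _ ≤ ∫ t in Ioi 0, max t 1 ^ p * exp (-t ^ 2 / 2) :=
      integral_mono_of_nonneg (ae_of_all _ fun t => (exp_pos _).le)
        (integrableOn_max_one_rpow_mul_exp_neg_sq_div two_pos hp) <| ae_of_all _ fun t =>
          le_mul_of_one_le_left (exp_pos _).le (one_le_rpow (le_max_right _ _) hp)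

theorem tail_to_moment_bound_general {Ω : Type*} [MeasurableSpace Ω]
    (P : Measure Ω) [IsProbabilityMeasure P]
    (Y : Ω → ℝ) (hYnn : ∀ ω, 0 ≤ Y ω)
    (e σ : ℝ) (he : 0 ≤ e) (hσ : 0 < σ)
    (htail : ∀ u : ℝ, 0 < u →
      (P {ω | Y ω > e + u}).toReal ≤ 2 * Real.exp (-u ^ 2 / (2 * σ ^ 2)))
    (r : ℝ) (hr : 1 < r) :
    (∫ ω, Y ω ^ r ∂P) ≤
        e ^ r + 2 * r * ∫ t in Set.Ioi (0 : ℝ), (t + e) ^ (r - 1) * Real.exp (-t ^ 2 / (2 * σ ^ 2)) ∧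
    e ^ r + 2 * r * (∫ t in Set.Ioi (0 : ℝ), (t + e) ^ (r - 1) * Real.exp (-t ^ 2 / (2 * σ ^ 2))) ≤
        8 * r * (e + σ) ^ r * ∫ t in Set.Ioi (0 : ℝ), (max t 1) ^ (r - 1) * Real.exp (-t ^ 2 / 2) := by
  set I₁ := ∫ t in Ioi (0 : ℝ), (t + e) ^ (r - 1) * exp (-t ^ 2 / (2 * σ ^ 2))
  set I₂ := ∫ t in Ioi (0 : ℝ), max t 1 ^ (r - 1) * exp (-t ^ 2 / 2)
  have hp : 0 ≤ r - 1 := by linarith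
  have hc : 0 < 2 * σ ^ 2 := by positivity
  have hmoment := integral_rpow_le_of_meas_lt_add_le hYnn (by linarith) he htail <| by
    simpa only [IntegrableOn, mul_left_comm _ (2 : ℝ)] using
      (integrableOn_add_rpow_mul_exp_neg_sq_div hc he hp).const_mul 2
  have hI₁ : I₁ ≤ (e + σ) ^ r * I₂ := by
    simpa only [sub_add_cancel] using integral_add_rpow_mul_exp_neg_sq_div_le he hσ hp
  have hI₂ : 1 ≤ I₂ := one_le_integral_max_one_rpow_mul_exp_neg_sq_div hp
  have he_rpow : e ^ r ≤ (e + σ) ^ r := rpow_le_rpow he (by linarith) (by linarith)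
  have hA : 0 ≤ (e + σ) ^ r := by positivity
  refine ⟨?_, ?_⟩
  · refine hmoment.trans_eq ?_
    simp_rw [mul_left_comm _ (2 : ℝ)]
    rw [integral_const_mul]
    ring
  · have hAI₂ : (e + σ) ^ r ≤ (e + σ) ^ r * I₂ := le_mul_of_one_le_right hA hI₂
    have hrAI₂ : (e + σ) ^ r * I₂ ≤ r * ((e + σ) ^ r * I₂) :=
      le_mul_of_one_le_left (by positivity) hr.le
    calc e ^ r + 2 * r * I₁ ≤ (e + σ) ^ r + 2 * r * ((e + σ) ^ r * I₂) :=
          add_le_add he_rpow (mul_le_mul_of_nonneg_left hI₁ (by positivity))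
      _ ≤ 8 * r * (e + σ) ^ r * I₂ := by linarith

/-- Abstract tail-to-moment bound (proof of Lemma A.1): if `Y ≥ 0` satisfies
`P(Y > e + u) ≤ 2 exp(-u²/(2σ²))` for all `u > 0`, then for `r > 1`,
`E[Y^r] ≤ e^r + 2r ∫₀^∞ (t+e)^{r-1} exp(-t²/(2σ²)) dt
       ≤ 8r (e+σ)^r ∫₀^∞ (t ∨ 1)^{r-1} exp(-t²/2) dt`. -/
theorem tail_to_moment_bound {Ω : Type*} [MeasurableSpace Ω]
    (P : Measure Ω) [IsProbabilityMeasure P]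
    (Y : Ω → ℝ) (hYmeas : Measurable Y) (hYnn : ∀ ω, 0 ≤ Y ω)
    (e σ : ℝ) (he : 0 ≤ e) (hσ : 0 < σ)
    (htail : ∀ u : ℝ, 0 < u →
      (P {ω | Y ω > e + u}).toReal ≤ 2 * Real.exp (-u ^ 2 / (2 * σ ^ 2)))
    (r : ℝ) (hr : 1 < r) :
    (∫ ω, Y ω ^ r ∂P) ≤
        e ^ r + 2 * r * ∫ t in Set.Ioi (0 : ℝ), (t + e) ^ (r - 1) * Real.exp (-t ^ 2 / (2 * σ ^ 2)) ∧
    e ^ r + 2 * r * (∫ t in Set.Ioi (0 : ℝ), (t + e) ^ (r - 1) * Real.exp (-t ^ 2 / (2 * σ ^ 2))) ≤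
        8 * r * (e + σ) ^ r * ∫ t in Set.Ioi (0 : ℝ), (max t 1) ^ (r - 1) * Real.exp (-t ^ 2 / 2) :=
  tail_to_moment_bound_general P Y hYnn e σ he hσ htail r hr
end

section
/- Dudley-type integral estimate (Lemma A.4 of the paper): Let a > 0 and \sigma > 0 satisfy a\sigma < e - 1 (so that ln(1 + a\sigma) < 1 and ln ln^{-1}(1 + a\eta) > 0 for 0 < \eta \leq \sigma). Then \int_0^\sigma \sqrt{ ln( 1 / ln(1 + a\eta) ) } d\eta \leq (e/a) \cdot \sqrt{ ln(1/ln(1+a\sigma)) } / ln(1+a\sigma) \cdot ( 1 + 1/(2 ln(1/ln(1+a\sigma))) ). -/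
/-!
By concavity, `log (1 + a η) ≥ (η / σ) L` with `L = log (1 + a σ) < 1`, so with
`U = log (1 / L) > 0` the integrand is at most
`√(log (σ / η) + U) ≤ (log (σ / η) + 2 U) / (2 √U)` (AM–GM). As `∫₀^σ log (σ / η) dη = σ`,
the integral is at most `σ (1 + 2 U) / (2 √U)`, and `σ ≤ e / (a L)` because `a σ < e`;
this is the right-hand side.
-/

open MeasureTheory Real Set

namespace Real

theorem mul_log_one_add_le_log_one_add_mul {x t : ℝ} (hx : -1 < x) (ht₀ : 0 ≤ t) (ht₁ : t ≤ 1) :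
    t * log (1 + x) ≤ log (1 + t * x) := by
  have := strictConcaveOn_log_Ioi.concaveOn.2 (mem_Ioi.2 one_pos)
    (mem_Ioi.2 (by linarith : (0 : ℝ) < 1 + x)) (sub_nonneg.2 ht₁) ht₀ (sub_add_cancel 1 t)
  simp only [smul_eq_mul, log_one, mul_zero, zero_add, mul_one] at this
  rwa [show 1 - t + t * (1 + x) = 1 + t * x by ring] at this

theorem log_one_add_lt_one {x : ℝ} (hx₀ : -1 < x) (hx : x < exp 1 - 1) : log (1 + x) < 1 :=
  (log_lt_log (by linarith) (by linarith)).trans_eq (log_exp 1)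

theorem log_inv_log_one_add_pos {x : ℝ} (hx₀ : 0 < x) (hx : x < exp 1 - 1) :
    0 < log (1 / log (1 + x)) :=
  log_pos (one_lt_one_div (log_pos (by linarith)) (log_one_add_lt_one (by linarith) hx))

theorem sqrt_le_add_div_two_sqrt {x y : ℝ} (hx : 0 ≤ x) (hy : 0 < y) :
    √x ≤ (x + y) / (2 * √y) := by
  rw [le_div_iff₀ (by positivity)]
  have := two_mul_le_add_sq (√x) (√y)
  rw [sq_sqrt hx, sq_sqrt hy.le] at this
  linarith

theorem log_inv_log_one_add_mul_le {a η σ : ℝ} (ha : 0 < a) (hη : 0 < η) (hησ : η ≤ σ) :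
    log (1 / log (1 + a * η)) ≤ log σ - log η + log (1 / log (1 + a * σ)) := by
  have hσ : 0 < σ := hη.trans_le hησ
  have hL : 0 < log (1 + a * σ) := log_pos (by nlinarith)
  have hconc : η / σ * log (1 + a * σ) ≤ log (1 + a * η) := by
    convert mul_log_one_add_le_log_one_add_mul (x := a * σ) (by nlinarith) (by positivity)
      ((div_le_one hσ).2 hησ) using 3
    field_simp
  have := log_le_log (by positivity) hconc
  rw [log_mul (by positivity) hL.ne', log_div hη.ne' hσ.ne'] at this
  simp only [one_div, log_inv]
  linarith

theorem integral_log_sub_log_add_div {b : ℝ} (hb : 0 ≤ b) (c d : ℝ) :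
    ∫ x in Ioc 0 b, (log b - log x + c) / d = b * (1 + c) / d := by
  have hlog : IntervalIntegrable log volume 0 b := intervalIntegral.intervalIntegrable_log'
  rw [← intervalIntegral.integral_of_le hb, intervalIntegral.integral_div,
    intervalIntegral.integral_add (intervalIntegrable_const.sub hlog) intervalIntegrable_const,
    intervalIntegral.integral_sub intervalIntegrable_const hlog, integral_log]
  simp only [intervalIntegral.integral_const, sub_zero, smul_eq_mul, log_zero, mul_zero, add_zero,
    sub_sub_cancel]
  ring

theorem sqrt_log_inv_log_one_add_mul_le {a η σ : ℝ} (ha : 0 < a) (hη : 0 < η) (hησ : η ≤ σ)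
    (h : a * σ < exp 1 - 1) :
    √(log (1 / log (1 + a * η))) ≤
      (log σ - log η + 2 * log (1 / log (1 + a * σ))) / (2 * √(log (1 / log (1 + a * σ)))) := by
  have hU := log_inv_log_one_add_pos (mul_pos ha (hη.trans_le hησ)) h
  have hg := log_inv_log_one_add_pos (mul_pos ha hη) (lt_of_le_of_lt (by gcongr) h)
  calc _ ≤ _ := sqrt_le_add_div_two_sqrt hg.le hU
    _ ≤ _ := div_le_div_of_nonneg_right
      (by linarith [log_inv_log_one_add_mul_le ha hη hησ]) (by positivity)

end Real

/-- Lemma A.4 (Dudley-type integral estimate): for `a > 0`, `σ > 0` with `aσ < e - 1`,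
`∫₀^σ √(ln(1/ln(1+aη))) dη ≤ (e/a) · √(ln(1/ln(1+aσ)))/ln(1+aσ) ·
  (1 + 1/(2 ln(1/ln(1+aσ))))`. -/
theorem dudley_type_integral_bound (a σ : ℝ) (ha : 0 < a) (hσ : 0 < σ)
    (h : a * σ < Real.exp 1 - 1) :
    ∫ η in Set.Ioc (0 : ℝ) σ, Real.sqrt (Real.log (1 / Real.log (1 + a * η))) ≤
      Real.exp 1 / a *
        (Real.sqrt (Real.log (1 / Real.log (1 + a * σ))) / Real.log (1 + a * σ)) *
        (1 + 1 / (2 * Real.log (1 / Real.log (1 + a * σ)))) := by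
  have hU := log_inv_log_one_add_pos (mul_pos ha hσ) h
  set L := log (1 + a * σ)
  set U := log (1 / L)
  have hL : 0 < L := log_pos (by nlinarith)
  have hL1 : L < 1 := log_one_add_lt_one (by nlinarith) h
  have hbound_int : IntegrableOn (fun η ↦ (log σ - log η + 2 * U) / (2 * √U)) (Ioc 0 σ) :=
    (intervalIntegrable_iff_integrableOn_Ioc_of_le hσ.le).1 <|
      ((intervalIntegrable_const.sub intervalIntegral.intervalIntegrable_log').add
        intervalIntegrable_const).div_const _
  calc _ ≤ ∫ η in Ioc 0 σ, (log σ - log η + 2 * U) / (2 * √U) :=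
        integral_mono_of_nonneg (.of_forall fun _ ↦ sqrt_nonneg _) hbound_int <|
          ae_restrict_of_forall_mem measurableSet_Ioc fun η hη ↦
            sqrt_log_inv_log_one_add_mul_le ha hη.1 hη.2 h
    _ = σ * ((1 + 2 * U) / (2 * √U)) := by
        rw [integral_log_sub_log_add_div hσ.le, mul_div_assoc]
    _ ≤ exp 1 / (a * L) * ((1 + 2 * U) / (2 * √U)) := by
        gcongr
        rw [le_div_iff₀ (by positivity)]
        nlinarith [mul_lt_of_lt_one_right (mul_pos ha hσ) hL1]
    _ = _ := by
        field_simp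
        rw [sq_sqrt hU.le]
        ring
end
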